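/- arXiv:2305.08331 — 2 statements merged into one kernel-verified Lean document; each statement's English description precedes it below -/
import Mathlib

section
/- Let H = T ∪ C be a Halin graph and let e = uv ∈ E(T) be a tree edge such that both u and v are non-leaf vertices of T. Then every cycle 𝒞 in H containing e has length at least min(|F1|, |F2|), where F1 and F2 are the two bounded faces of H incident to e; explicitly, if w1w2 and w1′w2′ are the two outer-cycle edges of C for which e lies on the unique path in T between their endpoints, then the length of 𝒞 is at least min(d_T(w1, w2), d_T(w1′, w2′)) + 1. -/
open SimpleGraph

/-- Degree of a vertex as the `ncard` of its neighbour set. -/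
noncomputable def ncDeg {V : Type*} (G : SimpleGraph V) (v : V) : ℕ :=
  (G.neighborSet v).ncard

/-- A leaf is a vertex of degree one. -/
def IsLeaf {V : Type*} (G : SimpleGraph V) (v : V) : Prop :=
  ncDeg G v = 1

/-- A Halin graph, presented by its characteristic tree `T` and outer cycle `C`.
The underlying graph is `T ⊔ C`.  The outer cycle is a `2`-regular connected graph
whose support is exactly the set of leaves of `T`, every non-leaf of `T` has degree
at least three, and the cycle is compatible with a planar embedding: for every edge
`uv` of `T`, the leaves lying in each component of `T - uv` are consecutive on the
cycle, i.e. they induce a connected subgraph of the cycle. -/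
structure HalinGraph (V : Type*) [Fintype V] : Type _ where
  /-- the characteristic tree -/
  T : SimpleGraph V
  /-- the outer cycle -/
  C : SimpleGraph V
  tree_isTree : T.IsTree
  four_le_card : 4 ≤ Fintype.card V
  nonleaf_degree : ∀ v : V, ¬ IsLeaf T v → 3 ≤ ncDeg T v
  support_C : C.support = {v : V | IsLeaf T v}
  two_regular : ∀ v ∈ C.support, ncDeg C v = 2
  cycle_connected : (C.induce C.support).Connected
  planar : ∀ u v : V, T.Adj u v →
    (C.induce {x : V | IsLeaf T x ∧ (T.deleteEdges {s(u, v)}).Reachable u x}).Connected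

/-- The Halin graph itself: the (edge-disjoint) union of the tree and the outer cycle. -/
def HalinGraph.graph {V : Type*} [Fintype V] (H : HalinGraph V) : SimpleGraph V :=
  H.T ⊔ H.C

/-- Number of edges of a graph. -/
noncomputable def eCount {V : Type*} (G : SimpleGraph V) : ℕ :=
  G.edgeSet.ncard

/-- A graph is `C₄`-free iff it contains no cycle of length `4`. -/
def C4Free {V : Type*} (G : SimpleGraph V) : Prop :=
  ∀ (v : V) (w : G.Walk v v), w.IsCycle → w.length ≠ 4

/-- A semi-branching vertex of the characteristic tree: a non-leaf with at least one
leaf neighbour and at least two non-leaf neighbours. -/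
def SemiBranching {V : Type*} (T : SimpleGraph V) (v : V) : Prop :=
  ¬ IsLeaf T v ∧ (∃ x, T.Adj v x ∧ IsLeaf T x) ∧
    ∃ x y : V, x ≠ y ∧ T.Adj v x ∧ T.Adj v y ∧ ¬ IsLeaf T x ∧ ¬ IsLeaf T y


/-!
Deleting `uv` splits `T` into the side `A` of `u` and the side `B` of `v`. Without `uv`, a cycle
through `uv` is a trail from `u` to `v`, so it crosses from `A` to `B` along an outer-cycle edge
`ab`, which is one of `w1w2`, `w1'w2'`. As `d_T(a, b) = d_T(u, a) + 1 + d_T(v, b)`, it remains to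
see that the parts of the trail before and after `ab` have lengths at least `d_T(u, a)` and
`d_T(v, b)`. This follows from the potential `Φ(x) = 2 (x | a)_u + 2 (x | b)_v` (Gromov products
in `T`): it vanishes at `u` and `v`, equals `2 d_T(u, a)` at `a` and `2 d_T(v, b)` at `b`, and
changes by at most `2` along every edge of `H` except `ab`. Along tree edges this is the triangle
inequality; along outer-cycle edges it rests on the leaves beyond each tree edge forming an arc
of `C`.
-/

namespace SimpleGraph

variable {V : Type*} {G T : SimpleGraph V}

namespace Walk

lemma exists_eq_append_cons_of_mem_darts {x y : V} {p : G.Walk x y} {d : G.Dart}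
    (hd : d ∈ p.darts) :
    ∃ (q : G.Walk x d.fst) (r : G.Walk d.snd y), p = q.append (cons d.adj r) := by
  induction p with
  | nil => simp at hd
  | cons h p ih =>
    rcases List.mem_cons.mp hd with rfl | hd
    · exact ⟨nil, p, rfl⟩
    · obtain ⟨q, r, rfl⟩ := ih hd
      exact ⟨cons h q, r, rfl⟩

lemma abs_sub_le_mul_length (f : V → ℤ) (K : ℤ) {x y : V} (p : G.Walk x y)
    (hf : ∀ d ∈ p.darts, |f d.fst - f d.snd| ≤ K) : |f x - f y| ≤ K * p.length := by
  induction p with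
  | nil => simp
  | cons h p ih =>
    have h₁ := hf _ List.mem_cons_self
    have h₂ := ih fun d hd => hf d (List.mem_cons_of_mem _ hd)
    rw [length_cons, Nat.cast_succ]
    calc _ ≤ |f _ - f _| + |f _ - f _| := abs_sub_le _ _ _
      _ ≤ _ := by simp only at h₁; linarith

lemma IsTrail.exists_walk_of_mem_edges {x u v : V} {c : G.Walk x x} (hc : c.IsTrail)
    (he : s(u, v) ∈ c.edges) :
    ∃ w : G.Walk u v, w.IsTrail ∧ s(u, v) ∉ w.edges ∧ w.length + 1 = c.length := by
  have key : ∀ d ∈ c.darts, ∃ w : G.Walk d.snd d.fst,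
      w.IsTrail ∧ d.edge ∉ w.edges ∧ w.length + 1 = c.length := by
    intro d hd
    obtain ⟨q, r, rfl⟩ := exists_eq_append_cons_of_mem_darts hd
    have hnd := hc.edges_nodup
    simp only [edges_append, edges_cons] at hnd
    have hnd' : (d.edge :: (r.edges ++ q.edges)).Nodup :=
      (List.perm_middle.trans (List.perm_append_comm.cons _)).nodup_iff.mp hnd
    refine ⟨r.append q, ⟨?_⟩, ?_, ?_⟩
    · simpa [edges_append] using (List.nodup_cons.mp hnd').2
    · simpa [edges_append] using (List.nodup_cons.mp hnd').1
    · simp only [length_append, length_cons]; omega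
  obtain ⟨d, hd, hde⟩ := List.mem_map.mp (show s(u, v) ∈ c.darts.map Dart.edge from he)
  obtain ⟨⟨a, b⟩, hab⟩ := d
  obtain ⟨w, hw, hwe, hwl⟩ := key _ hd
  rcases dart_edge_eq_mk'_iff.mp hde with h | h <;> simp only [Prod.mk.injEq] at h <;>
    obtain ⟨rfl, rfl⟩ := h
  · exact ⟨w.reverse, hw.reverse, by simpa [Sym2.eq_swap] using hwe, by simpa using hwl⟩
  · exact ⟨w, hw, by simpa [Sym2.eq_swap] using hwe, hwl⟩

lemma dist_getVert_of_length_eq_dist {u a : V} (w : G.Walk u a)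
    (hw : w.length = G.dist u a) {j : ℕ} (hj : j ≤ w.length) :
    G.dist u (w.getVert j) = j ∧ G.dist (w.getVert j) a = w.length - j := by
  have h₁ : G.dist u (w.getVert j) ≤ j := by
    simpa [hj] using G.dist_le (w.take j)
  have h₂ : G.dist (w.getVert j) a ≤ w.length - j := by
    simpa using G.dist_le (w.drop j)
  have h₃ : G.dist u a ≤ G.dist u (w.getVert j) + G.dist (w.getVert j) a :=
    (w.take j).reachable.dist_triangle_left _
  omega

end Walk

def side (T : SimpleGraph V) (p q : V) : Set V :=
  {x | (T.deleteEdges {s(p, q)}).Reachable p x}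

lemma self_mem_side (p q : V) : p ∈ T.side p q := Reachable.refl _

lemma mem_side_of_adj {p q x y : V} (hx : x ∈ T.side p q) (hxy : T.Adj x y)
    (hne : s(x, y) ≠ s(p, q)) : y ∈ T.side p q :=
  hx.trans (deleteEdges_adj.mpr ⟨hxy, by simpa using hne⟩).reachable

lemma mem_side_or_mem_side (hconn : T.Connected) (p q x : V) :
    x ∈ T.side p q ∨ x ∈ T.side q p := by
  suffices ∀ y z (_ : T.Walk y z), z ∈ T.side p q ∨ z ∈ T.side q p →
      y ∈ T.side p q ∨ y ∈ T.side q p from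
    this x p (hconn x p).some (Or.inl (self_mem_side p q))
  intro y z w
  induction w with
  | nil => exact id
  | @cons y y' _ h _ ih =>
    intro hz
    by_cases he : s(y, y') = s(p, q)
    · rcases Sym2.eq_iff.mp he with ⟨rfl, -⟩ | ⟨rfl, -⟩
      · exact Or.inl (self_mem_side _ _)
      · exact Or.inr (self_mem_side _ _)
    · refine (ih hz).imp (mem_side_of_adj · h.symm ?_) (mem_side_of_adj · h.symm ?_)
      · rwa [Sym2.eq_swap]
      · rwa [Sym2.eq_swap, Sym2.eq_swap (a := q)]

lemma IsAcyclic.notMem_side (hT : T.IsAcyclic) {p q x : V} (hpq : T.Adj p q)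
    (hx : x ∈ T.side p q) : x ∉ T.side q p := fun hx' => by
  rw [side, Set.mem_ofPred_eq, Sym2.eq_swap] at hx'
  exact isBridge_iff.mp (isAcyclic_iff_forall_adj_isBridge.mp hT hpq) (hx.trans hx'.symm)

namespace IsTree

variable (hT : T.IsTree)
include hT

lemma mem_side_of_notMem_side {p q x : V} (hx : x ∉ T.side p q) : x ∈ T.side q p :=
  (mem_side_or_mem_side hT.connected p q x).resolve_left hx

lemma dist_eq_of_mem_side {p q x z : V} (hpq : T.Adj p q) (hx : x ∈ T.side p q)
    (hz : z ∈ T.side q p) : T.dist x z = T.dist x p + 1 + T.dist q z := by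
  have hconn := hT.connected
  apply le_antisymm
  · have h₁ : T.dist x z ≤ T.dist x p + T.dist p z := hconn.dist_triangle
    have h₂ : T.dist p z ≤ T.dist p q + T.dist q z := hconn.dist_triangle
    rw [dist_eq_one_iff_adj.mpr hpq] at h₂
    omega
  obtain ⟨w, hw, hwl⟩ := hconn.exists_path_of_dist x z
  have hmem : s(p, q) ∈ w.edges := w.mem_edges_of_not_reachable_deleteEdges fun h =>
    hT.isAcyclic.notMem_side hpq (hx.trans h) hz
  obtain ⟨d, hd, hde⟩ := List.mem_map.mp (show s(p, q) ∈ w.darts.map Dart.edge from hmem)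
  obtain ⟨w₁, w₂, rfl⟩ := Walk.exists_eq_append_cons_of_mem_darts hd
  have hnd := hw.edges_nodup
  simp only [Walk.edges_append, Walk.edges_cons] at hnd
  have hw₁ : s(p, q) ∉ w₁.edges := fun h =>
    List.disjoint_of_nodup_append hnd h (hde ▸ List.mem_cons_self)
  have hfst : d.fst ∈ T.side p q :=
    hx.trans (reachable_deleteEdges_iff_exists_walk.mpr ⟨w₁, hw₁⟩)
  obtain ⟨hp, hq⟩ : d.fst = p ∧ d.snd = q := by
    rcases dart_edge_eq_mk'_iff.mp hde with h | h
    · exact Prod.ext_iff.mp h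
    · rw [show d.fst = q from congrArg Prod.fst h] at hfst
      exact absurd hfst (hT.isAcyclic.notMem_side hpq.symm (self_mem_side _ _))
  have h₁ : T.dist x p ≤ w₁.length := hp ▸ T.dist_le w₁
  have h₂ : T.dist q z ≤ w₂.length := hq ▸ T.dist_le w₂
  simp only [Walk.length_append, Walk.length_cons] at hwl
  omega

lemma mem_side_iff_dist_lt {p q x : V} (hpq : T.Adj p q) :
    x ∈ T.side p q ↔ T.dist p x < T.dist q x := by
  constructor
  · intro hx
    have := hT.dist_eq_of_mem_side hpq hx (self_mem_side q p)
    rw [dist_self, dist_comm, dist_comm (G := T) (u := x)] at this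
    omega
  · intro h
    by_contra hx
    have := hT.dist_eq_of_mem_side hpq.symm (hT.mem_side_of_notMem_side hx) (self_mem_side p q)
    rw [dist_self, dist_comm, dist_comm (G := T) (u := x)] at this
    omega

lemma side_subset_side {p q z : V} (hqp : T.Adj q p) (hqz : T.Adj q z) (hpz : p ≠ z) :
    T.side z q ⊆ T.side q p := by
  intro x hx
  have hp : p ∈ T.side q z :=
    mem_side_of_adj (self_mem_side q z) hqp fun h => hpz (Sym2.congr_right.mp h)
  have h₁ := hT.dist_eq_of_mem_side hqz hp hx
  have h₂ := hT.dist_eq_of_mem_side hqz (self_mem_side q z) hx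
  rw [dist_self] at h₂
  rw [dist_eq_one_iff_adj.mpr hqp.symm] at h₁
  rw [hT.mem_side_iff_dist_lt hqp]
  omega

/-- A vertex of the side farthest from `q` is a leaf. -/
lemma exists_isLeaf_mem_side [Finite V] {q z : V} (hzq : T.Adj z q) :
    ∃ g, IsLeaf T g ∧ g ∈ T.side z q := by
  have hq : q ∉ T.side z q := hT.isAcyclic.notMem_side hzq.symm (self_mem_side q z)
  obtain ⟨g, hg, hmax⟩ := (Set.toFinite (T.side z q)).exists_maximalFor (T.dist q) _
    ⟨z, self_mem_side z q⟩
  refine ⟨g, ?_, hg⟩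
  by_contra hleaf
  have hgq : g ≠ q := fun h => hq (h ▸ hg)
  obtain ⟨m₁, m₂, hm₁, hm₂, hm⟩ : ∃ m₁ m₂, T.Adj g m₁ ∧ T.Adj g m₂ ∧ m₁ ≠ m₂ := by
    obtain ⟨w, -, -⟩ := hT.connected.exists_path_of_dist g q
    have hne : (T.neighborSet g).Nonempty := ⟨_, w.adj_snd (Walk.not_nil_of_ne hgq)⟩
    have : 1 < (T.neighborSet g).ncard := by
      have := (Set.ncard_pos (Set.toFinite _)).mpr hne
      unfold IsLeaf ncDeg at hleaf
      omega
    exact (Set.one_lt_ncard_iff (Set.toFinite _)).mp this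
  obtain ⟨m, hgm, hqm⟩ : ∃ m, T.Adj g m ∧ q ∈ T.side g m := by
    by_contra! h
    exact hT.isAcyclic.notMem_side hm₁ (hT.side_subset_side hm₁ hm₂ hm
      (hT.mem_side_of_notMem_side (h m₂ hm₂))) (hT.mem_side_of_notMem_side (h m₁ hm₁))
  have hm : m ∈ T.side z q := by
    refine mem_side_of_adj hg hgm fun he => ?_
    rcases Sym2.eq_iff.mp he with ⟨rfl, rfl⟩ | ⟨rfl, -⟩
    · exact hq hqm
    · exact hgq rfl
  have := hT.dist_eq_of_mem_side hgm hqm (self_mem_side m g)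
  have := hmax hm
  simp only [dist_self] at *
  omega

lemma exists_adj_adj_mem_side {u a : V} {i : ℕ} (hi : i + 2 ≤ T.dist u a) :
    ∃ p q r, T.Adj p q ∧ T.Adj q r ∧ p ≠ r ∧ T.dist u p = i ∧ T.dist u q = i + 1 ∧
      u ∈ T.side p q ∧ a ∈ T.side q p ∧ u ∈ T.side q r ∧ a ∈ T.side r q := by
  obtain ⟨w, hw⟩ := hT.connected.exists_walk_length_eq_dist u a
  have hd := fun j (hj : j ≤ w.length) => w.dist_getVert_of_length_eq_dist hw hj
  obtain ⟨hp₁, hp₂⟩ := hd i (by omega)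
  obtain ⟨hq₁, hq₂⟩ := hd (i + 1) (by omega)
  obtain ⟨hr₁, hr₂⟩ := hd (i + 2) (by omega)
  have hpq : T.Adj (w.getVert i) (w.getVert (i + 1)) := w.adj_getVert_succ (by omega)
  have hqr : T.Adj (w.getVert (i + 1)) (w.getVert (i + 2)) := w.adj_getVert_succ (by omega)
  have hp₃ : T.dist (w.getVert i) u = i := dist_comm.trans hp₁
  have hq₃ : T.dist (w.getVert (i + 1)) u = i + 1 := dist_comm.trans hq₁
  have hr₃ : T.dist (w.getVert (i + 2)) u = i + 2 := dist_comm.trans hr₁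
  refine ⟨_, _, _, hpq, hqr, fun h => by rw [h] at hp₁; omega, hp₁, hq₁,
    (hT.mem_side_iff_dist_lt hpq).mpr ?_, (hT.mem_side_iff_dist_lt hpq.symm).mpr ?_,
    (hT.mem_side_iff_dist_lt hqr).mpr ?_, (hT.mem_side_iff_dist_lt hqr.symm).mpr ?_⟩ <;> omega

end IsTree

/-- Twice the Gromov product `(x | y)_w`; in a tree, `(x | y)_w` is the length of the common
initial segment of the geodesics from `w` to `x` and to `y`. -/
noncomputable def twiceGromovProduct (G : SimpleGraph V) (w x y : V) : ℤ :=
  G.dist w x + G.dist w y - G.dist x y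

@[simp]
lemma twiceGromovProduct_self_left (w y : V) : G.twiceGromovProduct w w y = 0 := by
  simp [twiceGromovProduct, dist_comm (u := w)]

@[simp]
lemma twiceGromovProduct_self_right (w y : V) :
    G.twiceGromovProduct w y y = 2 * G.dist w y := by
  simp [twiceGromovProduct]
  ring

section Connected

variable (hG : G.Connected)
include hG

lemma twiceGromovProduct_nonneg (w x y : V) : 0 ≤ G.twiceGromovProduct w x y := by
  have : G.dist x y ≤ G.dist x w + G.dist w y := hG.dist_triangle
  have : G.dist x w = G.dist w x := dist_comm
  unfold twiceGromovProduct
  omega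

lemma twiceGromovProduct_le (w x y : V) : G.twiceGromovProduct w x y ≤ 2 * G.dist w y := by
  have : G.dist w x ≤ G.dist w y + G.dist y x := hG.dist_triangle
  have : G.dist y x = G.dist x y := dist_comm
  unfold twiceGromovProduct
  omega

lemma twiceGromovProduct_le_of_adj (w y : V) {x x' : V} (h : G.Adj x x') :
    G.twiceGromovProduct w x y ≤ G.twiceGromovProduct w x' y + 2 := by
  have h₁ : G.dist w x ≤ G.dist w x' + G.dist x' x := hG.dist_triangle
  have h₂ : G.dist x' y ≤ G.dist x' x + G.dist x y := hG.dist_triangle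
  rw [dist_eq_one_iff_adj.mpr h.symm] at h₁ h₂
  unfold twiceGromovProduct
  omega

end Connected

namespace IsTree

variable (hT : T.IsTree)
include hT

lemma twiceGromovProduct_eq_zero {u v a x : V} (huv : T.Adj u v) (ha : a ∈ T.side u v)
    (hx : x ∈ T.side v u) : T.twiceGromovProduct u x a = 0 := by
  have h₁ := hT.dist_eq_of_mem_side huv ha hx
  have h₂ := hT.dist_eq_of_mem_side huv (self_mem_side u v) hx
  have : T.dist x a = T.dist a x := dist_comm
  have : T.dist a u = T.dist u a := dist_comm
  rw [dist_self] at h₂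
  unfold twiceGromovProduct
  omega

variable {p q w y : V} (hpq : T.Adj p q) (hw : w ∈ T.side p q) (hy : y ∈ T.side q p)
include hpq hw hy

lemma twiceGromovProduct_le_of_mem_side {x : V} (hx : x ∈ T.side p q) :
    T.twiceGromovProduct w x y ≤ 2 * T.dist w p := by
  have h₁ := hT.dist_eq_of_mem_side hpq hx hy
  have h₂ := hT.dist_eq_of_mem_side hpq hw hy
  have h₃ : T.dist w x ≤ T.dist w p + T.dist p x := hT.connected.dist_triangle
  have : T.dist p x = T.dist x p := dist_comm
  unfold twiceGromovProduct
  omega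

lemma le_twiceGromovProduct_of_mem_side {x : V} (hx : x ∈ T.side q p) :
    2 * T.dist w p + 2 ≤ T.twiceGromovProduct w x y := by
  have h₁ := hT.dist_eq_of_mem_side hpq hw hx
  have h₂ := hT.dist_eq_of_mem_side hpq hw hy
  have h₃ : T.dist x y ≤ T.dist x q + T.dist q y := hT.connected.dist_triangle
  have : T.dist q x = T.dist x q := dist_comm
  unfold twiceGromovProduct
  omega

end IsTree

lemma ncard_adj_fst_mem_le [Finite V] {C : SimpleGraph V} {k : ℕ}
    (hdeg : ∀ v, (C.neighborSet v).ncard ≤ k) (S : Set V) :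
    {e : V × V | C.Adj e.1 e.2 ∧ e.1 ∈ S}.ncard ≤ k * S.ncard := by
  classical
  have := Fintype.ofFinite V
  have hmaps : Set.MapsTo Prod.fst ({e : V × V | C.Adj e.1 e.2 ∧ e.1 ∈ S}.toFinset : Set (V × V))
      (S.toFinset : Set V) := fun e he => by
    simp only [Set.coe_toFinset] at he ⊢
    exact he.2
  rw [Set.ncard_eq_toFinset_card', Finset.card_eq_sum_card_fiberwise hmaps,
    Set.ncard_eq_toFinset_card', mul_comm, ← smul_eq_mul]
  refine Finset.sum_le_card_nsmul _ _ _ fun x _ => ?_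
  calc _ ≤ (C.neighborSet x).toFinset.card := by
        refine Finset.card_le_card_of_injOn Prod.snd ?_ ?_
        · intro e he
          simp only [Finset.coe_filter, Set.mem_toFinset] at he
          simp only [Set.coe_toFinset, mem_neighborSet]
          exact he.2 ▸ he.1.1
        · intro e he e' he' h
          simp only [Finset.coe_filter] at he he'
          exact Prod.ext (he.2.trans he'.2.symm) h
    _ ≤ k := by rw [← Set.ncard_eq_toFinset_card']; exact hdeg x

/-- A connected induced subgraph on `S` has at least `|S| - 1` edges, i.e. `2|S| - 2` darts. -/
lemma Connected.two_mul_ncard_le [Finite V] {C : SimpleGraph V} {S : Set V}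
    (hS : (C.induce S).Connected) :
    2 * S.ncard ≤ {e : V × V | C.Adj e.1 e.2 ∧ e.1 ∈ S ∧ e.2 ∈ S}.ncard + 2 := by
  classical
  have := Fintype.ofFinite V
  have hinj : Function.Injective fun d : (C.induce S).Dart => (d.fst.1, d.snd.1) := by
    intro d d' h
    simp only [Prod.mk.injEq] at h
    exact Dart.ext _ _ (Prod.ext (Subtype.ext h.1) (Subtype.ext h.2))
  have hrange : Set.range (fun d : (C.induce S).Dart => (d.fst.1, d.snd.1)) ⊆
      {e : V × V | C.Adj e.1 e.2 ∧ e.1 ∈ S ∧ e.2 ∈ S} := by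
    rintro _ ⟨d, rfl⟩
    exact ⟨d.adj, d.fst.2, d.snd.2⟩
  have h₁ := Set.ncard_le_ncard hrange
  rw [Set.ncard_range_of_injective hinj, Nat.card_eq_fintype_card,
    dart_card_eq_twice_card_edges, edgeFinset_card, ← Nat.card_eq_fintype_card] at h₁
  have h₂ := hS.card_vert_le_card_edgeSet_add_one
  rw [Nat.card_coe_set_eq] at h₂
  omega

lemma ncard_boundary_le_two [Finite V] {C : SimpleGraph V}
    (hdeg : ∀ v, (C.neighborSet v).ncard ≤ 2) {S : Set V} (hS : (C.induce S).Connected) :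
    {e : V × V | C.Adj e.1 e.2 ∧ e.1 ∈ S ∧ e.2 ∉ S}.ncard ≤ 2 := by
  have hsplit : {e : V × V | C.Adj e.1 e.2 ∧ e.1 ∈ S} =
      {e : V × V | C.Adj e.1 e.2 ∧ e.1 ∈ S ∧ e.2 ∈ S} ∪
        {e : V × V | C.Adj e.1 e.2 ∧ e.1 ∈ S ∧ e.2 ∉ S} := by
    ext e
    simp only [Set.mem_union, Set.mem_ofPred_eq]
    tauto
  have hdisj : Disjoint {e : V × V | C.Adj e.1 e.2 ∧ e.1 ∈ S ∧ e.2 ∈ S}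
      {e : V × V | C.Adj e.1 e.2 ∧ e.1 ∈ S ∧ e.2 ∉ S} :=
    Set.disjoint_left.mpr fun _ h₁ h₂ => h₂.2.2 h₁.2.2
  have := ncard_adj_fst_mem_le hdeg S
  rw [hsplit, Set.ncard_union_eq hdisj] at this
  have := hS.two_mul_ncard_le
  omega

/-- A vertex of `S` outside `S'` would give `S'` a third boundary edge. -/
lemma subset_of_two_boundary_edges [Finite V] {C : SimpleGraph V}
    (hdeg : ∀ v, (C.neighborSet v).ncard ≤ 2) {S S' : Set V} (hS : (C.induce S).Connected)
    (hS' : (C.induce S').Connected) (hsub : S' ⊆ S) {x₁ y₁ x₂ y₂ : V} (h₁ : C.Adj x₁ y₁)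
    (h₂ : C.Adj x₂ y₂) (hx₁ : x₁ ∈ S') (hx₂ : x₂ ∈ S') (hy₁ : y₁ ∉ S) (hy₂ : y₂ ∉ S)
    (hne : (x₁, y₁) ≠ (x₂, y₂)) : S ⊆ S' := by
  intro g hg
  by_contra hg'
  let w := ((hS ⟨g, hg⟩ ⟨x₁, hsub hx₁⟩).some).map (Embedding.induce S).toHom
  have hw : ∀ z ∈ w.support, z ∈ S := by
    intro z hz
    rw [Walk.support_map, List.mem_map] at hz
    obtain ⟨z', -, rfl⟩ := hz
    exact z'.2
  obtain ⟨d, hd, hd₁, hd₂⟩ := w.exists_boundary_dart {z | z ∉ S'} hg' (not_not.mpr hx₁)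
  have h₃ : d.fst ∈ S := hw _ (w.dart_fst_mem_support_of_mem_darts hd)
  refine (ncard_boundary_le_two hdeg hS').not_gt ((Set.two_lt_ncard_iff (Set.toFinite _)).mpr
    ⟨(x₁, y₁), (x₂, y₂), (d.snd, d.fst), ⟨h₁, hx₁, fun h => hy₁ (hsub h)⟩,
      ⟨h₂, hx₂, fun h => hy₂ (hsub h)⟩, ⟨d.adj.symm, not_not.mp hd₂, hd₁⟩, hne, ?_, ?_⟩)
  · rintro ⟨-, rfl⟩; exact hy₁ h₃
  · rintro ⟨-, rfl⟩; exact hy₂ h₃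

end SimpleGraph

namespace HalinGraph

open SimpleGraph

variable {V : Type*} [Fintype V] (H : HalinGraph V)

lemma isLeaf_of_adj {x y : V} (h : H.C.Adj x y) : IsLeaf H.T x := by
  have hx : x ∈ H.C.support := (mem_support _).mpr ⟨y, h⟩
  rwa [H.support_C] at hx

lemma ncard_neighborSet_le_two (v : V) : (H.C.neighborSet v).ncard ≤ 2 := by
  by_cases hv : v ∈ H.C.support
  · exact (H.two_regular v hv).le
  · have : H.C.neighborSet v = ∅ :=
      Set.eq_empty_of_forall_notMem fun y hy => hv ((mem_support _).mpr ⟨y, hy⟩)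
    simp [this]

lemma exists_isLeaf_mem_side_mem_side {p q r : V} (hqp : H.T.Adj q p) (hqr : H.T.Adj q r)
    (hpr : p ≠ r) : ∃ g, IsLeaf H.T g ∧ g ∈ H.T.side q p ∧ g ∈ H.T.side q r := by
  have hT := H.tree_isTree
  have hsub : ({p, r} : Set V) ⊆ H.T.neighborSet q := by
    rintro z (rfl | rfl)
    exacts [hqp, hqr]
  have h₂ := Set.ncard_le_ncard hsub (Set.toFinite _)
  rw [Set.ncard_pair hpr] at h₂
  have h₃ : 3 ≤ ncDeg H.T q := H.nonleaf_degree q fun h => by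
    unfold IsLeaf ncDeg at h
    omega
  obtain ⟨z, hz, hzpr⟩ := Set.exists_mem_notMem_of_ncard_lt_ncard
    (show ({p, r} : Set V).ncard < (H.T.neighborSet q).ncard by
      rw [Set.ncard_pair hpr]; unfold ncDeg at h₃; omega)
  obtain ⟨g, hg, hgz⟩ := hT.exists_isLeaf_mem_side (hz : H.T.Adj q z).symm
  refine ⟨g, hg, hT.side_subset_side hqp hz ?_ hgz, hT.side_subset_side hqr hz ?_ hgz⟩
  · exact fun h => hzpr (Or.inl h.symm)
  · exact fun h => hzpr (Or.inr h.symm)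

/-- If `(x | a)_u > (y | a)_u + 1`, there would be consecutive edges `pq`, `qr` on the tree path
from `u` to `a` such that `xy` and `ab` leave both the leaves beyond `qr` and those beyond `pq`.
By planarity these leaf sets are nested arcs of `C`, which therefore coincide; but a leaf on a
third branch at `q` lies beyond `pq` and not beyond `qr`. -/
lemma twiceGromovProduct_le_add_two {u a b x y : V} (hab : H.C.Adj a b)
    (hb : H.T.twiceGromovProduct u b a = 0) (hxy : H.C.Adj x y) (hne : (x, y) ≠ (a, b)) :
    H.T.twiceGromovProduct u x a ≤ H.T.twiceGromovProduct u y a + 2 := by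
  have hT := H.tree_isTree
  by_contra! hlt
  have hy₀ := twiceGromovProduct_nonneg hT.connected u y a
  have hxk := twiceGromovProduct_le hT.connected u x a
  obtain ⟨i, hi₁, hi₂⟩ : ∃ i : ℕ, 2 * (i : ℤ) ≤ H.T.twiceGromovProduct u y a ∧
      H.T.twiceGromovProduct u y a ≤ 2 * i + 1 :=
    ⟨(H.T.twiceGromovProduct u y a / 2).toNat, by omega, by omega⟩
  obtain ⟨p, q, r, hpq, hqr, hpr, hp, hq, hu₁, ha₁, hu₂, ha₂⟩ :=
    hT.exists_adj_adj_mem_side (u := u) (a := a) (i := i) (by omega)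
  have hyS : y ∉ H.T.side q p := fun h => by
    have := hT.le_twiceGromovProduct_of_mem_side hpq hu₁ ha₁ h
    omega
  have hbS : b ∉ H.T.side q p := fun h => by
    have := hT.le_twiceGromovProduct_of_mem_side hpq hu₁ ha₁ h
    omega
  have hxS : x ∈ H.T.side r q := by
    by_contra h
    have := hT.twiceGromovProduct_le_of_mem_side hqr hu₂ ha₂ (hT.mem_side_of_notMem_side h)
    omega
  obtain ⟨g, hg, hgp, hgr⟩ := H.exists_isLeaf_mem_side_mem_side hpq.symm hqr hpr
  have hsub := subset_of_two_boundary_edges H.ncard_neighborSet_le_two (H.planar q p hpq.symm)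
    (H.planar r q hqr.symm) (fun z hz => ⟨hz.1, hT.side_subset_side hpq.symm hqr hpr hz.2⟩)
    hxy hab ⟨H.isLeaf_of_adj hxy, hxS⟩ ⟨H.isLeaf_of_adj hab, ha₂⟩ (fun h => hyS h.2)
    (fun h => hbS h.2) hne
  exact hT.isAcyclic.notMem_side hqr hgr (hsub ⟨hg, hgp⟩).2

section Potential

variable {u v a b : V} (huv : H.T.Adj u v) (ha : a ∈ H.T.side u v) (hb : b ∈ H.T.side v u)
  (hab : H.C.Adj a b)
include huv ha hb hab

/-- Each of the two terms moves by at most `2` along an edge other than `ab`, and at every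
vertex one of them vanishes. -/
lemma abs_potential_sub_le_two {x y : V} (hxy : H.graph.Adj x y) (hne : s(x, y) ≠ s(a, b)) :
    |(H.T.twiceGromovProduct u x a + H.T.twiceGromovProduct v x b) -
      (H.T.twiceGromovProduct u y a + H.T.twiceGromovProduct v y b)| ≤ 2 := by
  have hT := H.tree_isTree
  have hconn := hT.connected
  have h₁ : ∀ x y, H.graph.Adj x y → s(x, y) ≠ s(a, b) →
      H.T.twiceGromovProduct u x a ≤ H.T.twiceGromovProduct u y a + 2 := by
    rintro x y (h | h) hne
    · exact twiceGromovProduct_le_of_adj hconn u a h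
    · refine H.twiceGromovProduct_le_add_two hab (hT.twiceGromovProduct_eq_zero huv ha hb) h ?_
      rintro ⟨⟩
      exact hne rfl
  have h₂ : ∀ x y, H.graph.Adj x y → s(x, y) ≠ s(a, b) →
      H.T.twiceGromovProduct v x b ≤ H.T.twiceGromovProduct v y b + 2 := by
    rintro x y (h | h) hne
    · exact twiceGromovProduct_le_of_adj hconn v b h
    · refine H.twiceGromovProduct_le_add_two hab.symm
        (hT.twiceGromovProduct_eq_zero huv.symm hb ha) h ?_
      rintro ⟨⟩
      exact hne Sym2.eq_swap
  have hzero : ∀ z, H.T.twiceGromovProduct u z a = 0 ∨ H.T.twiceGromovProduct v z b = 0 := by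
    intro z
    rcases mem_side_or_mem_side hconn u v z with hz | hz
    · exact Or.inr (hT.twiceGromovProduct_eq_zero huv.symm hb hz)
    · exact Or.inl (hT.twiceGromovProduct_eq_zero huv ha hz)
  have hne' : s(y, x) ≠ s(a, b) := by rwa [Sym2.eq_swap]
  have := h₁ x y hxy hne
  have := h₁ y x hxy.symm hne'
  have := h₂ x y hxy hne
  have := h₂ y x hxy.symm hne'
  have := hzero x
  have := hzero y
  have := twiceGromovProduct_nonneg hconn u x a
  have := twiceGromovProduct_nonneg hconn u y a
  have := twiceGromovProduct_nonneg hconn v x b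
  have := twiceGromovProduct_nonneg hconn v y b
  rw [abs_le]
  constructor <;> omega

lemma dist_le_length_add_length {w₁ : H.graph.Walk u a} {w₂ : H.graph.Walk b v}
    (h₁ : s(a, b) ∉ w₁.edges) (h₂ : s(a, b) ∉ w₂.edges) :
    H.T.dist a b ≤ w₁.length + 1 + w₂.length := by
  have hT := H.tree_isTree
  set Φ := fun z => H.T.twiceGromovProduct u z a + H.T.twiceGromovProduct v z b with hΦ
  have lip : ∀ {x y} (w : H.graph.Walk x y), s(a, b) ∉ w.edges → |Φ x - Φ y| ≤ 2 * w.length :=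
    fun w hw => Walk.abs_sub_le_mul_length Φ 2 w fun d hd =>
      H.abs_potential_sub_le_two huv ha hb hab d.adj fun h =>
        hw (by rw [← h]; exact List.mem_map_of_mem hd)
  have hu : Φ u = 0 := by
    simp [hΦ, hT.twiceGromovProduct_eq_zero huv.symm hb (self_mem_side u v)]
  have hv : Φ v = 0 := by
    simp [hΦ, hT.twiceGromovProduct_eq_zero huv ha (self_mem_side v u)]
  have ha' : Φ a = 2 * H.T.dist u a := by
    simp [hΦ, hT.twiceGromovProduct_eq_zero huv.symm hb ha]
  have hb' : Φ b = 2 * H.T.dist v b := by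
    simp [hΦ, hT.twiceGromovProduct_eq_zero huv ha hb]
  have hab' := hT.dist_eq_of_mem_side huv ha hb
  have : H.T.dist a u = H.T.dist u a := dist_comm
  have := lip w₁ h₁
  have := lip w₂ h₂
  rw [abs_le] at *
  omega

end Potential

lemma exists_adj_dist_add_one_le_length {u v x : V} (huv : H.T.Adj u v)
    {c : H.graph.Walk x x} (hc : c.IsTrail) (he : s(u, v) ∈ c.edges) :
    ∃ a b, H.C.Adj a b ∧ a ∈ H.T.side u v ∧ b ∈ H.T.side v u ∧
      H.T.dist a b + 1 ≤ c.length := by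
  have hT := H.tree_isTree
  obtain ⟨w, hw, hwe, hwl⟩ := hc.exists_walk_of_mem_edges he
  obtain ⟨d, hd, hd₁, hd₂⟩ := w.exists_boundary_dart (H.T.side u v) (self_mem_side u v)
    (hT.isAcyclic.notMem_side huv.symm (self_mem_side v u))
  have hd₂' := hT.mem_side_of_notMem_side hd₂
  have hdC : H.C.Adj d.fst d.snd := d.adj.resolve_left fun h =>
    hd₂ (mem_side_of_adj hd₁ h fun h' => hwe (h' ▸ List.mem_map_of_mem hd))
  obtain ⟨w₁, w₂, rfl⟩ := Walk.exists_eq_append_cons_of_mem_darts hd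
  have hnd := hw.edges_nodup
  simp only [Walk.edges_append, Walk.edges_cons] at hnd
  have h₁ : s(d.fst, d.snd) ∉ w₁.edges := fun h =>
    List.disjoint_of_nodup_append hnd h List.mem_cons_self
  have h₂ : s(d.fst, d.snd) ∉ w₂.edges := fun h =>
    (List.nodup_cons.mp (List.nodup_append.mp hnd).2.1).1 h
  have := H.dist_le_length_add_length huv hd₁ hd₂' hdC h₁ h₂
  simp only [Walk.length_append, Walk.length_cons] at hwl
  exact ⟨d.fst, d.snd, hdC, hd₁, hd₂', by omega⟩

end HalinGraph

theorem cycle_through_tree_edge_long_general {V : Type*} [Fintype V] (H : HalinGraph V)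
    {u v : V} (huv : H.T.Adj u v)
    {w1 w2 w1' w2' : V}
    (honly : ∀ a b : V, H.C.Adj a b →
      (∀ p : H.T.Walk a b, p.IsPath → s(u, v) ∈ p.edges) →
      s(a, b) = s(w1, w2) ∨ s(a, b) = s(w1', w2'))
    (x : V) (c : H.graph.Walk x x) (hc : c.IsCycle) (he : s(u, v) ∈ c.edges) :
    min (H.T.dist w1 w2) (H.T.dist w1' w2') + 1 ≤ c.length := by
  obtain ⟨a, b, hab, ha, hb, hlen⟩ := H.exists_adj_dist_add_one_le_length huv hc.isTrail he
  have hcross : ∀ p : H.T.Walk a b, p.IsPath → s(u, v) ∈ p.edges := fun p _ =>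
    p.mem_edges_of_not_reachable_deleteEdges fun h =>
      H.tree_isTree.isAcyclic.notMem_side huv (ha.trans h) hb
  have hdist : ∀ {y z : V}, s(a, b) = s(y, z) → H.T.dist a b = H.T.dist y z := by
    intro y z h
    rcases Sym2.eq_iff.mp h with ⟨rfl, rfl⟩ | ⟨rfl, rfl⟩
    exacts [rfl, dist_comm]
  rcases honly a b hab hcross with h | h <;> have := hdist h <;> omega

/-- If `e = uv` is a tree edge of a Halin graph with both endpoints non-leaves, and
`w₁w₂`, `w₁'w₂'` are the two outer-cycle edges whose tree paths pass through `e`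
(i.e. bound the two bounded faces incident to `e`), then every cycle through `e`
has length at least `min (d_T(w₁, w₂), d_T(w₁', w₂')) + 1`. -/
theorem cycle_through_tree_edge_long {V : Type*} [Fintype V] (H : HalinGraph V)
    {u v : V} (huv : H.T.Adj u v) (hu : ¬ IsLeaf H.T u) (hv : ¬ IsLeaf H.T v)
    {w1 w2 w1' w2' : V} (h12 : H.C.Adj w1 w2) (h12' : H.C.Adj w1' w2')
    (hne : s(w1, w2) ≠ s(w1', w2'))
    (hpath : ∀ p : H.T.Walk w1 w2, p.IsPath → s(u, v) ∈ p.edges)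
    (hpath' : ∀ p : H.T.Walk w1' w2', p.IsPath → s(u, v) ∈ p.edges)
    (honly : ∀ a b : V, H.C.Adj a b →
      (∀ p : H.T.Walk a b, p.IsPath → s(u, v) ∈ p.edges) →
      s(a, b) = s(w1, w2) ∨ s(a, b) = s(w1', w2'))
    (x : V) (c : H.graph.Walk x x) (hc : c.IsCycle) (he : s(u, v) ∈ c.edges) :
    min (H.T.dist w1 w2) (H.T.dist w1' w2') + 1 ≤ c.length :=
  cycle_through_tree_edge_long_general H huv honly x c hc he
end

section
/- Let H be an n-vertex C4-free Halin graph with characteristic tree T. If every longest path in T has length exactly 4, then 3 divides n − 1 and e(H) = 5(n−1)/3. -/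
open SimpleGraph

/-!
Let `v₀ v₁ c v₃ v₄` be a longest path of `T`. For any vertex `u`, the tree path from `c` to `u`
leaves `c` away from `v₁` or away from `v₃`, so prefixing `v₀ v₁` or `v₄ v₃` gives a path two edges
longer. Hence `u` is within distance two of `c`, and at distance exactly two it ends a longest path
and is a leaf. So every non-leaf other than `c` is adjacent to `c`, while `v₀` is a leaf that is not.

`C₄`-freeness now pins the leaves down. The centre `c` has no leaf neighbour: otherwise, walking
along `C` from such a leaf to `v₀`, some edge `yz` of `C` leads from a leaf `y` of `c` to a leaf `z`
whose parent `w` is another non-leaf, hence adjacent to `c`, and `c y z w` is a 4-cycle. Every other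
non-leaf `u` has at least two leaf neighbours, as its degree is at least three and `c` is its only
non-leaf neighbour, and at most two: by planarity its leaves are consecutive on `C`, and three of
them would contain a `C`-path `a b d`, closing the 4-cycle `u a b d`.

So with `k + 1` non-leaves there are `2k` leaves, `n = 3k + 1`, and
`e(H) = e(T) + e(C) = (n - 1) + 2k = 5k`.
-/

section

variable {V : Type*} {G : SimpleGraph V} {u v w : V}

def leafNeighborSet (G : SimpleGraph V) (v : V) : Set V :=
  {x | IsLeaf G x ∧ G.Adj v x}

lemma isLeaf_iff_exists_neighborSet_eq : IsLeaf G v ↔ ∃ w, G.neighborSet v = {w} :=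
  Set.ncard_eq_one

lemma IsLeaf.exists_adj (hv : IsLeaf G v) : ∃ w, G.Adj v w := by
  obtain ⟨w, hw⟩ := isLeaf_iff_exists_neighborSet_eq.mp hv
  exact ⟨w, show w ∈ G.neighborSet v by rw [hw]; rfl⟩

lemma IsLeaf.eq_of_adj (hv : IsLeaf G v) (hu : G.Adj v u) (hw : G.Adj v w) : u = w := by
  obtain ⟨x, hx⟩ := isLeaf_iff_exists_neighborSet_eq.mp hv
  have hu' : u ∈ G.neighborSet v := hu
  have hw' : w ∈ G.neighborSet v := hw
  rw [hx] at hu' hw'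
  exact hu'.trans hw'.symm

lemma ncDeg_eq_degree (v : V) [Fintype (G.neighborSet v)] : ncDeg G v = G.degree v := by
  rw [ncDeg, Set.ncard_eq_toFinset_card', Set.toFinset_card, card_neighborSet_eq_degree]

lemma eCount_eq_card_edgeFinset [Fintype G.edgeSet] : eCount G = G.edgeFinset.card :=
  Set.ncard_eq_toFinset_card' _

lemma C4Free.not_square (hfree : C4Free G) {a b c d : V} (hab : G.Adj a b) (hbc : G.Adj b c)
    (hcd : G.Adj c d) (hda : G.Adj d a) (hac : a ≠ c) (hbd : b ≠ d) : False := by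
  refine hfree a (.cons hab (.cons hbc (.cons hcd (.cons hda .nil)))) ?_ rfl
  rw [Walk.cons_isCycle_iff]
  simp [Walk.cons_isPath_iff, hab.ne, hbc.ne, hcd.ne, hda.ne, hac, hbd, hab.ne.symm,
    hda.ne.symm, hac.symm]

end

namespace SimpleGraph

variable {V : Type*} {G : SimpleGraph V} {u v w x y z : V}

lemma Connected.exists_adj_of_ne_of_ne (hG : G.Connected) (hwu : w ≠ u) (hwv : w ≠ v) :
    ∃ x, x ≠ u ∧ x ≠ v ∧ (G.Adj u x ∨ G.Adj v x) := by
  obtain ⟨p⟩ := hG u w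
  obtain ⟨d, -, hd, hd'⟩ := p.exists_boundary_dart {u, v} (by simp) (by simp [hwu, hwv])
  simp only [Set.mem_insert_iff, Set.mem_singleton_iff, not_or] at hd hd'
  refine ⟨d.snd, hd'.1, hd'.2, ?_⟩
  rcases hd with h | h
  · exact .inl (h ▸ d.adj)
  · exact .inr (h ▸ d.adj)

lemma Connected.exists_adj_adj (hG : G.Connected) (hxy : x ≠ y) (hxz : x ≠ z) (hyz : y ≠ z) :
    ∃ a b c, G.Adj a b ∧ G.Adj b c ∧ a ≠ c := by
  obtain ⟨p⟩ := hG x y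
  obtain ⟨d, -, hd, hd'⟩ := p.exists_boundary_dart {x} rfl hxy.symm
  rw [Set.mem_singleton_iff] at hd hd'
  have hxd : G.Adj x d.snd := hd ▸ d.adj
  obtain ⟨w, hwx, hwd⟩ : ∃ w, w ≠ x ∧ w ≠ d.snd := by
    by_cases hy : y = d.snd
    · exact ⟨z, hxz.symm, hy ▸ hyz.symm⟩
    · exact ⟨y, hxy.symm, hy⟩
  obtain ⟨t, htx, htd, ht | ht⟩ := hG.exists_adj_of_ne_of_ne hwx hwd (u := x) (v := d.snd)
  · exact ⟨d.snd, x, t, hxd.symm, ht, htd.symm⟩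
  · exact ⟨x, d.snd, t, hxd, ht, htx.symm⟩

lemma Connected.not_adj_of_isLeaf [Fintype V] (hG : G.Connected) (hV : 2 < Fintype.card V)
    (hu : IsLeaf G u) (hv : IsLeaf G v) : ¬ G.Adj u v := by
  classical
  intro huv
  obtain ⟨w, -, hw⟩ := Finset.exists_mem_notMem_of_card_lt_card
    ((Finset.card_le_two (a := u) (b := v)).trans_lt (hV.trans_eq Finset.card_univ.symm))
  simp only [Finset.mem_insert, Finset.mem_singleton, not_or] at hw
  obtain ⟨x, hxu, hxv, hx | hx⟩ := hG.exists_adj_of_ne_of_ne hw.1 hw.2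
  · exact hxv (hu.eq_of_adj hx huv)
  · exact hxu (hv.eq_of_adj hx huv.symm)

lemma IsAcyclic.isPath_cons (hG : G.IsAcyclic) {q : G.Walk u v} (hq : q.IsPath)
    (h : G.Adj w u) (hw : w ≠ q.snd) : (Walk.cons h q).IsPath :=
  (Walk.cons_isPath_iff h q).mpr ⟨hq, fun hmem ↦ hw (hG.eq_snd_of_adj_start hq h.symm hmem)⟩

lemma IsAcyclic.not_adj_of_adj_of_adj (hG : G.IsAcyclic) (huv : G.Adj u v) (huw : G.Adj u w)
    (hvw : v ≠ w) : ¬ G.Adj v w := by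
  intro h
  have hq : (Walk.cons huv (Walk.cons h .nil)).IsPath := by simp [huv.ne, h.ne, huw.ne]
  exact hvw (hG.eq_snd_of_adj_start hq huw (by simp)).symm

lemma IsAcyclic.ncDeg_le_one_of_forall_length_le (hG : G.IsAcyclic) {p : G.Walk u v}
    (hp : p.IsPath) (hmax : ∀ a b (q : G.Walk a b), q.IsPath → q.length ≤ p.length) :
    ncDeg G u ≤ 1 := by
  by_contra! h
  obtain ⟨x, y, hx, hy, hxy⟩ :=
    (Set.one_lt_ncard_iff (Set.finite_of_ncard_pos (Nat.zero_lt_of_lt h))).mp h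
  obtain ⟨w, hw, hws⟩ : ∃ w, G.Adj u w ∧ w ≠ p.snd := by
    by_cases hxs : x = p.snd
    · exact ⟨y, hy, hxs ▸ hxy.symm⟩
    · exact ⟨x, hx, hxs⟩
  have := hmax _ _ _ (hG.isPath_cons hp hw.symm hws)
  simp at this

lemma Walk.IsPath.getVert_ne {p : G.Walk u v} (hp : p.IsPath) {i j : ℕ} (hi : i ≤ p.length)
    (hj : j ≤ p.length) (hij : i ≠ j) : p.getVert i ≠ p.getVert j :=
  fun h ↦ hij (hp.getVert_injOn hi hj h)

lemma IsAcyclic.length_le_one_of_two_le_ncDeg (hG : G.IsAcyclic)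
    (hmax : ∀ a b (q : G.Walk a b), q.IsPath → q.length ≤ 4) {x y c : V} (hxy : G.Adj x y)
    (hyc : G.Adj y c) (hxc : x ≠ c) {r : G.Walk c u} (hr : r.IsPath) (hy : y ≠ r.snd)
    (hu : 2 ≤ ncDeg G u) : r.length ≤ 1 := by
  have hq : (Walk.cons hxy (Walk.cons hyc r)).IsPath :=
    hG.isPath_cons (hG.isPath_cons hr hyc hy) hxy (by simpa using hxc)
  have hlen := hmax _ _ _ hq
  simp only [Walk.length_cons] at hlen
  by_contra! hr2
  have := hG.ncDeg_le_one_of_forall_length_le hq.reverse fun a b q hq' ↦ by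
    have := hmax a b q hq'
    simp only [Walk.length_reverse, Walk.length_cons]
    omega
  omega

lemma IsTree.eq_or_adj_getVert_two (hG : G.IsTree)
    (hmax : ∀ a b (q : G.Walk a b), q.IsPath → q.length ≤ 4) {p : G.Walk v w} (hp : p.IsPath)
    (hlen : p.length = 4) (hu : 2 ≤ ncDeg G u) : u = p.getVert 2 ∨ G.Adj (p.getVert 2) u := by
  classical
  obtain ⟨r, hr⟩ := (hG.connected (p.getVert 2) u).some.toPath
  have hr1 : r.length ≤ 1 := by
    by_cases h1 : p.getVert 1 = r.snd
    · refine hG.isAcyclic.length_le_one_of_two_le_ncDeg hmax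
        (p.adj_getVert_succ (i := 3) (by omega)).symm
        (p.adj_getVert_succ (i := 2) (by omega)).symm
        (hp.getVert_ne (by omega) (by omega) (by simp)) hr (fun h3 ↦ ?_) hu
      exact hp.getVert_ne (i := 1) (j := 3) (by omega) (by omega) (by simp) (h1.trans h3.symm)
    · exact hG.isAcyclic.length_le_one_of_two_le_ncDeg hmax
        (p.adj_getVert_succ (i := 0) (by omega)) (p.adj_getVert_succ (i := 1) (by omega))
        (hp.getVert_ne (by omega) (by omega) (by simp)) hr h1 hu
  rcases Nat.le_one_iff_eq_zero_or_eq_one.mp hr1 with h0 | h1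
  · exact .inl (Walk.eq_of_length_eq_zero h0).symm
  · exact .inr (Walk.adj_of_length_eq_one h1)

end SimpleGraph

namespace HalinGraph

variable {V : Type*} [Fintype V] (H : HalinGraph V)

lemma not_adj_of_isLeaf {u v : V} (hu : IsLeaf H.T u) (hv : IsLeaf H.T v) : ¬ H.T.Adj u v :=
  H.tree_isTree.connected.not_adj_of_isLeaf (by linarith [H.four_le_card]) hu hv

lemma mem_support_C_iff {v : V} : v ∈ H.C.support ↔ IsLeaf H.T v := by
  rw [H.support_C, Set.mem_ofPred_eq]

lemma isLeaf_of_adj_C {u v : V} (h : H.C.Adj u v) : IsLeaf H.T u :=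
  H.mem_support_C_iff.mp ⟨v, h⟩

lemma isLeaf_of_ncDeg_le_one {v : V} (h : ncDeg H.T v ≤ 1) : IsLeaf H.T v := by
  by_contra hv
  linarith [H.nonleaf_degree v hv]

lemma disjoint_edgeSet : Disjoint H.T.edgeSet H.C.edgeSet := by
  rw [Set.disjoint_left]
  rintro ⟨u, v⟩ hT hC
  exact H.not_adj_of_isLeaf (H.isLeaf_of_adj_C hC) (H.isLeaf_of_adj_C hC.symm) hT

lemma eCount_C : eCount H.C = {v | IsLeaf H.T v}.ncard := by
  classical
  have hdeg (v : V) : H.C.degree v = if IsLeaf H.T v then 2 else 0 := by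
    split_ifs with hv
    · rw [← ncDeg_eq_degree]
      exact H.two_regular v (H.mem_support_C_iff.mpr hv)
    · rwa [degree_eq_zero_iff_notMem_support, H.mem_support_C_iff]
  have hsum := H.C.sum_degrees_eq_twice_card_edges
  simp only [hdeg, Finset.sum_ite, Finset.sum_const_zero, Finset.sum_const, smul_eq_mul,
    add_zero] at hsum
  have hleaves : {v | IsLeaf H.T v}.ncard = (Finset.univ.filter fun v ↦ IsLeaf H.T v).card := by
    rw [← Set.ncard_coe_finset]
    simp
  rw [eCount_eq_card_edgeFinset, hleaves]
  omega

lemma eCount_graph : eCount H.graph = Fintype.card V - 1 + {v | IsLeaf H.T v}.ncard := by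
  classical
  rw [eCount, graph, edgeSet_sup, Set.ncard_union_eq H.disjoint_edgeSet, ← eCount, ← eCount,
    H.eCount_C, eCount_eq_card_edgeFinset, ← H.tree_isTree.card_edgeFinset, Nat.add_sub_cancel]

lemma exists_center (hex : ∃ (a b : V) (p : H.T.Walk a b), p.IsPath ∧ p.length = 4)
    (hmax : ∀ (a b : V) (p : H.T.Walk a b), p.IsPath → p.length ≤ 4) :
    ∃ c a, ¬ IsLeaf H.T c ∧ IsLeaf H.T a ∧ ¬ H.T.Adj c a ∧
      ∀ u, ¬ IsLeaf H.T u → u = c ∨ H.T.Adj c u := by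
  obtain ⟨a, b, p, hp, hlen⟩ := hex
  have ha : IsLeaf H.T a :=
    H.isLeaf_of_ncDeg_le_one (H.tree_isTree.isAcyclic.ncDeg_le_one_of_forall_length_le hp
      (hlen ▸ hmax))
  refine ⟨p.getVert 2, a, fun hc ↦ ?_, ha, fun hca ↦ ?_, fun u hu ↦ ?_⟩
  · exact hp.getVert_ne (i := 1) (j := 3) (by omega) (by omega) (by simp)
      (hc.eq_of_adj (p.adj_getVert_succ (i := 1) (by omega)).symm
        (p.adj_getVert_succ (i := 2) (by omega)))
  · have ha1 : H.T.Adj a (p.getVert 1) := by simpa using p.adj_getVert_succ (i := 0) (by omega)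
    exact hp.getVert_ne (i := 2) (j := 1) (by omega) (by omega) (by simp)
      (ha.eq_of_adj hca.symm ha1)
  · exact H.tree_isTree.eq_or_adj_getVert_two hmax hp hlen
      (by linarith [H.nonleaf_degree u hu])

lemma setOf_isLeaf_reachable_deleteEdges_eq {c u : V}
    (hcenter : ∀ u, ¬ IsLeaf H.T u → u = c ∨ H.T.Adj c u) (hc : ¬ IsLeaf H.T c)
    (hu : ¬ IsLeaf H.T u) (huc : u ≠ c) :
    {x | IsLeaf H.T x ∧ (H.T.deleteEdges {s(u, c)}).Reachable u x} = leafNeighborSet H.T u := by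
  have hcu : H.T.Adj c u := (hcenter u hu).resolve_left huc
  have hbridge : ¬ (H.T.deleteEdges {s(u, c)}).Reachable u c :=
    isBridge_iff.mp (isAcyclic_iff_forall_adj_isBridge.mp H.tree_isTree.isAcyclic hcu.symm)
  have hkeep {y z : V} (h : H.T.Adj y z) (hyu : y ≠ u) (hyc : y ≠ c) :
      (H.T.deleteEdges {s(u, c)}).Reachable y z :=
    (deleteEdges_adj.mpr ⟨h, by simp [hyu, hyc]⟩).reachable
  ext x
  refine ⟨fun ⟨hx, hux⟩ ↦ ⟨hx, ?_⟩, fun ⟨hx, hux⟩ ↦ ⟨hx, ?_⟩⟩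
  · obtain ⟨w, hxw⟩ := hx.exists_adj
    have huw := hux.trans (hkeep hxw (fun h ↦ hu (h ▸ hx)) (fun h ↦ hc (h ▸ hx)))
    by_cases hwu : w = u
    · exact hwu ▸ hxw.symm
    refine absurd ?_ hbridge
    rcases hcenter w fun hw ↦ H.not_adj_of_isLeaf hx hw hxw with rfl | hcw
    · exact huw
    · exact huw.trans (hkeep hcw.symm hwu hcw.ne.symm)
  · exact (hkeep hux.symm (fun h ↦ hu (h ▸ hx)) (fun h ↦ hc (h ▸ hx))).symm

lemma ncard_leafNeighborSet (hfree : C4Free H.graph) {c u : V}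
    (hcenter : ∀ u, ¬ IsLeaf H.T u → u = c ∨ H.T.Adj c u) (hc : ¬ IsLeaf H.T c)
    (hu : ¬ IsLeaf H.T u) (huc : u ≠ c) : (leafNeighborSet H.T u).ncard = 2 := by
  have hcu : H.T.Adj c u := (hcenter u hu).resolve_left huc
  apply le_antisymm
  · by_contra! h3
    obtain ⟨x, y, z, hx, hy, hz, hxy, hxz, hyz⟩ := (Set.two_lt_ncard_iff).mp h3
    have hconn := H.planar u c hcu.symm
    rw [H.setOf_isLeaf_reachable_deleteEdges_eq hcenter hc hu huc] at hconn
    obtain ⟨a, b, d, hab, hbd, had⟩ := hconn.exists_adj_adj (x := ⟨x, hx⟩) (y := ⟨y, hy⟩)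
      (z := ⟨z, hz⟩) (by simpa) (by simpa) (by simpa)
    exact hfree.not_square (.inl a.2.2) (.inr hab) (.inr hbd) (.inl d.2.2.symm)
      (fun h ↦ hu (h ▸ b.2.1)) (fun h ↦ had (Subtype.ext h))
  · have hsub : H.T.neighborSet u ⊆ insert c (leafNeighborSet H.T u) := by
      intro w huw
      by_cases hw : IsLeaf H.T w
      · exact Set.mem_insert_of_mem _ ⟨hw, huw⟩
      rcases hcenter w hw with rfl | hcw
      · exact Set.mem_insert _ _
      · exact absurd huw
          (H.tree_isTree.isAcyclic.not_adj_of_adj_of_adj hcu hcw (huw : H.T.Adj u w).ne)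
    have := calc 3 ≤ ncDeg H.T u := H.nonleaf_degree u hu
      _ ≤ (insert c (leafNeighborSet H.T u)).ncard := Set.ncard_le_ncard hsub
      _ ≤ (leafNeighborSet H.T u).ncard + 1 := Set.ncard_insert_le _ _
    omega

lemma leafNeighborSet_eq_empty (hfree : C4Free H.graph) {c a : V}
    (hcenter : ∀ u, ¬ IsLeaf H.T u → u = c ∨ H.T.Adj c u) (hc : ¬ IsLeaf H.T c)
    (ha : IsLeaf H.T a) (hca : ¬ H.T.Adj c a) : leafNeighborSet H.T c = ∅ := by
  rw [Set.eq_empty_iff_forall_notMem]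
  rintro x ⟨hx, hcx⟩
  obtain ⟨W⟩ := (H.cycle_connected ⟨x, H.mem_support_C_iff.mpr hx⟩
    ⟨a, H.mem_support_C_iff.mpr ha⟩).map (Embedding.induce _).toHom
  obtain ⟨d, -, ⟨-, hcy⟩, hz⟩ :=
    W.exists_boundary_dart (leafNeighborSet H.T c) ⟨hx, hcx⟩ fun h ↦ hca h.2
  have hzleaf := H.isLeaf_of_adj_C d.adj.symm
  obtain ⟨w, hzw⟩ := hzleaf.exists_adj
  have hw : ¬ IsLeaf H.T w := fun hw ↦ H.not_adj_of_isLeaf hzleaf hw hzw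
  have hcw : H.T.Adj c w :=
    (hcenter w hw).resolve_left fun hwc ↦ hz ⟨hzleaf, hwc ▸ hzw.symm⟩
  exact hfree.not_square (.inl hcy) (.inr d.adj) (.inl hzw) (.inl hcw.symm)
    (fun h ↦ hc (h ▸ hzleaf)) (fun h ↦ hw (h ▸ H.isLeaf_of_adj_C d.adj))

lemma ncard_isLeaf_add_two (hfree : C4Free H.graph) {c a : V}
    (hcenter : ∀ u, ¬ IsLeaf H.T u → u = c ∨ H.T.Adj c u) (hc : ¬ IsLeaf H.T c)
    (ha : IsLeaf H.T a) (hca : ¬ H.T.Adj c a) :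
    {v | IsLeaf H.T v}.ncard + 2 = 2 * {v | ¬ IsLeaf H.T v}.ncard := by
  classical
  set leaves := Finset.univ.filter fun v ↦ IsLeaf H.T v
  set inner := (Finset.univ.filter fun v ↦ ¬ IsLeaf H.T v).erase c
  have habove (x : V) (hx : x ∈ leaves) : (inner.bipartiteAbove H.T.Adj x).card = 1 := by
    have hx : IsLeaf H.T x := by simpa [leaves] using hx
    obtain ⟨w, hxw⟩ := hx.exists_adj
    have hwc : w ≠ c := by
      rintro rfl
      exact (Set.eq_empty_iff_forall_notMem.mp
        (H.leafNeighborSet_eq_empty hfree hcenter hc ha hca) x) ⟨hx, hxw.symm⟩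
    rw [Finset.card_eq_one]
    refine ⟨w, Finset.ext fun y ↦ ?_⟩
    simp only [Finset.mem_bipartiteAbove, inner, Finset.mem_erase, Finset.mem_filter,
      Finset.mem_univ, true_and, Finset.mem_singleton]
    refine ⟨fun ⟨_, hxy⟩ ↦ hx.eq_of_adj hxy hxw, ?_⟩
    rintro rfl
    exact ⟨⟨hwc, fun hy ↦ H.not_adj_of_isLeaf hx hy hxw⟩, hxw⟩
  have hbelow (u : V) (hu : u ∈ inner) : (leaves.bipartiteBelow H.T.Adj u).card = 2 := by
    simp only [inner, Finset.mem_erase, Finset.mem_filter, Finset.mem_univ, true_and] at hu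
    rw [← H.ncard_leafNeighborSet hfree hcenter hc hu.2 hu.1, ← Set.ncard_coe_finset]
    congr 1
    ext x
    simp [leaves, leafNeighborSet, adj_comm]
  have hcount := Finset.card_mul_eq_card_mul H.T.Adj habove hbelow
  have hleaves : leaves.card = {v | IsLeaf H.T v}.ncard := by
    rw [← Set.ncard_coe_finset]
    simp [leaves]
  have hinner : inner.card + 1 = {v | ¬ IsLeaf H.T v}.ncard := by
    rw [Finset.card_erase_add_one (by simpa using hc), ← Set.ncard_coe_finset]
    simp
  omega

end HalinGraph

/-- If every longest path of the characteristic tree of an `n`-vertex `C₄`-free Halin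
graph has length exactly `4`, then `3 ∣ n - 1` and the graph has `5(n-1)/3` edges. -/
theorem longest_path_four {V : Type*} [Fintype V] (H : HalinGraph V)
    (hfree : C4Free H.graph)
    (hex : ∃ (a b : V) (p : H.T.Walk a b), p.IsPath ∧ p.length = 4)
    (hmax : ∀ (a b : V) (p : H.T.Walk a b), p.IsPath → p.length ≤ 4) :
    3 ∣ (Fintype.card V - 1) ∧ eCount H.graph = 5 * (Fintype.card V - 1) / 3 := by
  obtain ⟨c, a, hc, ha, hca, hcenter⟩ := H.exists_center hex hmax
  have hleaves := H.ncard_isLeaf_add_two hfree hcenter hc ha hca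
  have hsplit := Set.ncard_add_ncard_compl {v | IsLeaf H.T v}
  rw [Set.compl_ofPred, Nat.card_eq_fintype_card] at hsplit
  rw [H.eCount_graph]
  omega
end
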